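/- Let α ∈ ℝ, p ∈ ℂ, r > 0, and let u be analytic on the punctured disc {z ∈ ℂ : 0 < |z − p| < r} and satisfy u''(z) = 2u(z)³ + z·u(z) − α there, with a simple pole at p of residue +1, i.e. (z − p)·u(z) → 1 as z → p. Then the Bäcklund transform v(z) := −u(z) + (2α+1)/f(z), where f(z) := 2u(z)² − 2u'(z) + z, is defined on a punctured neighbourhood of p and has a simple pole at p with residue −1: (z − p)·v(z) → −1 as z → p. Moreover, the function h(z) := v(z) + 1/(z − p) extends analytically to p with h(p) = 0, h'(p) = p/6, and h''(p) = (α + 2)/2, i.e. v(z) = −1/(z − p) + (p/6)(z − p) + ((α + 2)/4)(z − p)² + O((z − p)³) as z → p. -/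

import Mathlib

/-!
Near the pole write `u = 1/(z - p) + g` with `g` analytic at `p`. Substituting into PII and
clearing denominators gives
`(z - p)² g'' = 6 g + (z - p) (6 g² + p) + (z - p)² (2 g³ + 1 + z g - α)`,
and comparing the coefficients of `1`, `z - p` and `(z - p)²` on both sides yields
`g(p) = 0`, `g'(p) = -p/6` and `g''(p) = (α - 1)/2`. Likewise `f = F/(z - p)²` with `F` analytic
and `F(p) = 4`, so `v + 1/(z - p) = -g + (2α + 1) (z - p)²/F` is analytic at `p`, and its first
two derivatives at `p` are read off from those of `g` and from `F(p) = 4`.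
-/

open Filter Topology Set Metric

/-- The auxiliary function `f(z) = 2 u(z)^2 - 2 u'(z) + z` appearing in the
Bäcklund transformation for Painlevé II, in the complex setting. -/
noncomputable def piiFC (u : ℂ → ℂ) : ℂ → ℂ :=
  fun z => 2 * (u z) ^ 2 - 2 * deriv u z + z

/-- The Bäcklund transform `v(z) = -u(z) + (2α+1)/f(z)` of a solution `u`
of Painlevé II with parameter `α`, in the complex setting. -/
noncomputable def backlundC (α : ℝ) (u : ℂ → ℂ) : ℂ → ℂ :=
  fun z => -u z + (2 * (α : ℂ) + 1) / piiFC u z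

section SecondOrder

variable {𝕜 : Type*} [NontriviallyNormedField 𝕜] {p : 𝕜}

theorem AnalyticAt.deriv_deriv_add {F : Type*} [NormedAddCommGroup F] [NormedSpace 𝕜 F]
    [CompleteSpace F] {f g : 𝕜 → F} (hf : AnalyticAt 𝕜 f p) (hg : AnalyticAt 𝕜 g p) :
    deriv (deriv fun z => f z + g z) p = deriv (deriv f) p + deriv (deriv g) p := by
  have h : deriv (fun z => f z + g z) =ᶠ[𝓝 p] fun z => deriv f z + deriv g z := by
    filter_upwards [hf.eventually_analyticAt, hg.eventually_analyticAt] with z hfz hgz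
    exact deriv_add hfz.differentiableAt hgz.differentiableAt
  rw [h.deriv_eq, deriv_fun_add hf.deriv.differentiableAt hg.deriv.differentiableAt]

theorem hasDerivAt_sub_sq_mul {K : 𝕜 → 𝕜} {z : 𝕜} (hK : DifferentiableAt 𝕜 K z) :
    HasDerivAt (fun w => (w - p) ^ 2 * K w)
      (2 * ((z - p) * K z) + (z - p) ^ 2 * deriv K z) z := by
  refine ((((hasDerivAt_id z).sub_const p).pow 2).mul hK.hasDerivAt).congr_deriv ?_
  simp only [id, Pi.pow_apply, Nat.cast_ofNat]
  ring

theorem deriv_sub_sq_mul {K : 𝕜 → 𝕜} (hK : DifferentiableAt 𝕜 K p) :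
    deriv (fun z => (z - p) ^ 2 * K z) p = 0 := by
  simp [(hasDerivAt_sub_sq_mul hK).deriv]

theorem AnalyticAt.deriv_deriv_sub_sq_mul [CompleteSpace 𝕜] {K : 𝕜 → 𝕜}
    (hK : AnalyticAt 𝕜 K p) :
    deriv (deriv fun z => (z - p) ^ 2 * K z) p = 2 * K p := by
  have h : deriv (fun z => (z - p) ^ 2 * K z) =ᶠ[𝓝 p]
      fun z => 2 * ((z - p) * K z) + (z - p) ^ 2 * deriv K z := by
    filter_upwards [hK.eventually_analyticAt] with z hz
    exact (hasDerivAt_sub_sq_mul hz.differentiableAt).deriv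
  have h' : HasDerivAt (fun z => 2 * ((z - p) * K z) + (z - p) ^ 2 * deriv K z)
      (2 * (1 * K p + (p - p) * deriv K p) +
        (2 * ((p - p) * deriv K p) + (p - p) ^ 2 * deriv (deriv K) p)) p :=
    ((((hasDerivAt_id p).sub_const p).mul hK.differentiableAt.hasDerivAt).const_mul 2).add
      (hasDerivAt_sub_sq_mul hK.deriv.differentiableAt)
  rw [h.deriv_eq, h'.deriv]
  simp

theorem AnalyticAt.deriv_deriv_eq_two_mul [CompleteSpace 𝕜] {f R : 𝕜 → 𝕜}
    (hR : AnalyticAt 𝕜 R p) (hf : ∀ z, f z = f p + deriv f p * (z - p) + (z - p) ^ 2 * R z) :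
    deriv (deriv f) p = 2 * R p := by
  rw [funext hf, AnalyticAt.deriv_deriv_add (by fun_prop) (by fun_prop),
    hR.deriv_deriv_sub_sq_mul]
  simp

theorem derivs_neg_add_mul_sub_sq_mul [CompleteSpace 𝕜] {g K : 𝕜 → 𝕜} (c : 𝕜)
    (hg : AnalyticAt 𝕜 g p) (hK : AnalyticAt 𝕜 K p) :
    deriv (fun z => -g z + c * ((z - p) ^ 2 * K z)) p = -deriv g p ∧
      deriv (deriv fun z => -g z + c * ((z - p) ^ 2 * K z)) p =
        -deriv (deriv g) p + c * (2 * K p) := by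
  have hng : AnalyticAt 𝕜 (fun z => -g z) p := hg.neg
  constructor
  · rw [deriv_fun_add hng.differentiableAt (by fun_prop)]
    simp only [deriv.fun_neg, deriv_const_mul_field', deriv_sub_sq_mul hK.differentiableAt]
    ring
  · rw [AnalyticAt.deriv_deriv_add hng (by fun_prop)]
    simp only [deriv.fun_neg', deriv.fun_neg, deriv_const_mul_field', hK.deriv_deriv_sub_sq_mul]

theorem eq_zero_and_eq_of_eventually_sub_sq_mul_eq {A B : 𝕜 → 𝕜} {c₀ c₁ : 𝕜}
    (hA : ContinuousAt A p) (hB : ContinuousAt B p)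
    (h : ∀ᶠ z in 𝓝[≠] p, (z - p) ^ 2 * A z = c₀ + c₁ * (z - p) + (z - p) ^ 2 * B z) :
    c₀ = 0 ∧ c₁ = 0 ∧ A p = B p := by
  have h₀ : ∀ᶠ z in 𝓝[≠] p, (z - p) * ((z - p) * (A z - B z) - c₁) = c₀ := by
    filter_upwards [h] with z hz
    linear_combination hz
  have hc₀ : c₀ = 0 := by
    have := ((ContinuousAt.eventuallyEq_nhds_iff_eventuallyEq_nhdsNE (by fun_prop)
      continuousAt_const).1 h₀).eq_of_nhds
    simpa [eq_comm] using this
  have h₁ : ∀ᶠ z in 𝓝[≠] p, (z - p) * (A z - B z) = c₁ := by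
    filter_upwards [h₀, eventually_mem_nhdsWithin] with z hz hzp
    simpa [hc₀, sub_ne_zero.2 hzp, sub_eq_zero] using hz
  have hc₁ : c₁ = 0 := by
    have := ((ContinuousAt.eventuallyEq_nhds_iff_eventuallyEq_nhdsNE (by fun_prop)
      continuousAt_const).1 h₁).eq_of_nhds
    simpa [eq_comm] using this
  refine ⟨hc₀, hc₁, ((hA.eventuallyEq_nhds_iff_eventuallyEq_nhdsNE hB).1 ?_).eq_of_nhds⟩
  filter_upwards [h₁, eventually_mem_nhdsWithin] with z hz hzp
  simpa [hc₁, sub_ne_zero.2 hzp, sub_eq_zero] using hz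

end SecondOrder

section Laurent

variable {p c : ℂ}

theorem analyticAt_dslope {E : Type*} [NormedAddCommGroup E] [NormedSpace ℂ E] [CompleteSpace E]
    {f : ℂ → E} (hf : AnalyticAt ℂ f p) : AnalyticAt ℂ (dslope f p) p := by
  have hs : {z | AnalyticAt ℂ f z} ∈ 𝓝 p := hf.eventually_analyticAt
  refine ((Complex.differentiableOn_dslope hs).2 fun z hz => ?_).analyticAt hs
  exact hz.differentiableAt.differentiableWithinAt

theorem AnalyticAt.exists_eq_add_mul_add_sq_mul {f : ℂ → ℂ} (hf : AnalyticAt ℂ f p) :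
    ∃ R : ℂ → ℂ, AnalyticAt ℂ R p ∧
      ∀ z, f z = f p + deriv f p * (z - p) + (z - p) ^ 2 * R z := by
  refine ⟨dslope (dslope f p) p, analyticAt_dslope (analyticAt_dslope hf), fun z => ?_⟩
  have h₁ := sub_smul_dslope f p z
  have h₂ := sub_smul_dslope (dslope f p) p z
  rw [dslope_same] at h₂
  simp only [smul_eq_mul] at h₁ h₂
  linear_combination -h₁ - (z - p) * h₂

theorem exists_analyticAt_eq_div_sub_add {u : ℂ → ℂ}
    (hu : ∀ᶠ z in 𝓝[≠] p, DifferentiableAt ℂ u z)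
    (hpole : Tendsto (fun z => (z - p) * u z) (𝓝[≠] p) (𝓝 c)) :
    ∃ g : ℂ → ℂ, AnalyticAt ℂ g p ∧ ∀ᶠ z in 𝓝[≠] p, u z = c / (z - p) + g z := by
  set U := Function.update (fun z => (z - p) * u z) p c
  have hU : AnalyticAt ℂ U p := by
    refine Complex.analyticAt_of_differentiable_on_punctured_nhds_of_continuousAt ?_
      (continuousAt_update_same.2 hpole)
    filter_upwards [hu, eventually_mem_nhdsWithin] with z hz hzp
    refine ((differentiableAt_id.sub_const p).mul hz).congr_of_eventuallyEq ?_
    filter_upwards [eventually_ne_nhds hzp] with w hw using Function.update_of_ne hw _ _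
  refine ⟨dslope U p, analyticAt_dslope hU, ?_⟩
  filter_upwards [eventually_mem_nhdsWithin] with z hz
  have hzp : z - p ≠ 0 := sub_ne_zero.2 hz
  have h := sub_smul_dslope U p z
  rw [smul_eq_mul, show U p = c from Function.update_self ..,
    show U z = (z - p) * u z from Function.update_of_ne hz ..] at h
  field_simp
  linear_combination -h

theorem tendsto_sub_mul_of_eventuallyEq_div_sub_add {v H : ℂ → ℂ} (hH : ContinuousAt H p)
    (hv : ∀ᶠ z in 𝓝[≠] p, v z = c / (z - p) + H z) :
    Tendsto (fun z => (z - p) * v z) (𝓝[≠] p) (𝓝 c) := by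
  have hlim : Tendsto (fun z => c + (z - p) * H z) (𝓝[≠] p) (𝓝 c) := by
    have : ContinuousAt (fun z => c + (z - p) * H z) p := by fun_prop
    simpa using this.tendsto.mono_left nhdsWithin_le_nhds
  refine hlim.congr' ?_
  filter_upwards [hv, eventually_mem_nhdsWithin] with z hz hzp
  rw [hz]
  field_simp [sub_ne_zero.2 hzp]

theorem deriv_div_sub_pow_add_eventuallyEq {u g : ℂ → ℂ} (n : ℕ) (hg : AnalyticAt ℂ g p)
    (hu : ∀ᶠ z in 𝓝[≠] p, u z = c / (z - p) ^ n + g z) :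
    ∀ᶠ z in 𝓝[≠] p, deriv u z = -(n * c) / (z - p) ^ (n + 1) + deriv g z := by
  have hu' : u =ᶠ[𝓝[≠] p] fun z => c / (z - p) ^ n + g z := hu
  filter_upwards [hu'.nhdsNE_deriv, eventually_mem_nhdsWithin,
    hg.eventually_analyticAt.filter_mono nhdsWithin_le_nhds] with z hz hzp hgz
  have hzp : z - p ≠ 0 := sub_ne_zero.2 hzp
  have hpow : HasDerivAt (fun w => c / (w - p) ^ n) (-(n * c) / (z - p) ^ (n + 1)) z := by
    refine ((hasDerivAt_const z c).div (((hasDerivAt_id z).sub_const p).pow n)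
      (pow_ne_zero n hzp)).congr_deriv ?_
    rcases n with _ | k
    · simp
    · simp only [id, Pi.pow_apply, Nat.add_sub_cancel]
      field_simp
      ring
  have hsum : HasDerivAt (fun w => c / (w - p) ^ n + g w) _ z :=
    hpow.add hgz.differentiableAt.hasDerivAt
  rw [hz, hsum.deriv]

end Laurent

section PainleveII

variable {α p : ℂ} {u g : ℂ → ℂ}

theorem painleveII_regularPart_eq (hg : AnalyticAt ℂ g p)
    (hu : ∀ᶠ z in 𝓝[≠] p, u z = 1 / (z - p) + g z)
    (hPII : ∀ᶠ z in 𝓝[≠] p, deriv (deriv u) z = 2 * u z ^ 3 + z * u z - α) :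
    ∀ᶠ z in 𝓝[≠] p, (z - p) ^ 2 * deriv (deriv g) z =
      6 * g z + (z - p) * (6 * g z ^ 2 + p) + (z - p) ^ 2 * (2 * g z ^ 3 + 1 + z * g z - α) := by
  have hu' : ∀ᶠ z in 𝓝[≠] p, deriv u z = -1 / (z - p) ^ 2 + deriv g z := by
    simpa using deriv_div_sub_pow_add_eventuallyEq 1 hg (by simpa using hu)
  have hu'' : ∀ᶠ z in 𝓝[≠] p, deriv (deriv u) z = 2 / (z - p) ^ 3 + deriv (deriv g) z := by
    simpa using deriv_div_sub_pow_add_eventuallyEq 2 hg.deriv hu'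
  filter_upwards [hu, hu'', hPII, eventually_mem_nhdsWithin] with z hz hz'' hzPII hzp
  have hzp : z - p ≠ 0 := sub_ne_zero.2 hzp
  rw [hz'', hz] at hzPII
  field_simp at hzPII
  refine mul_left_cancel₀ hzp ?_
  linear_combination hzPII

theorem painleveII_regularPart_derivs (hg : AnalyticAt ℂ g p)
    (h : ∀ᶠ z in 𝓝[≠] p, (z - p) ^ 2 * deriv (deriv g) z =
      6 * g z + (z - p) * (6 * g z ^ 2 + p) + (z - p) ^ 2 * (2 * g z ^ 3 + 1 + z * g z - α)) :
    g p = 0 ∧ deriv g p = -p / 6 ∧ deriv (deriv g) p = (α - 1) / 2 := by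
  obtain ⟨R, hR, hgR⟩ := hg.exists_eq_add_mul_add_sq_mul
  -- `B` collects the `(z - p)²` remainders of `6 g` and `6 (z - p) g²` after expanding `g` by `hgR`.
  obtain ⟨h₀, h₁, h₂⟩ := eq_zero_and_eq_of_eventually_sub_sq_mul_eq (A := deriv (deriv g))
    (B := fun z => 6 * R z + 6 * (g z + g p) * (deriv g p + (z - p) * R z) +
      (2 * g z ^ 3 + 1 + z * g z - α))
    (c₀ := 6 * g p) (c₁ := 6 * deriv g p + 6 * g p ^ 2 + p) hg.deriv.deriv.continuousAt
    (by fun_prop)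
    (h.mono fun z hz => by linear_combination hz + (6 + 6 * (z - p) * (g z + g p)) * hgR z)
  have hg₀ : g p = 0 := by linear_combination h₀ / 6
  rw [hR.deriv_deriv_eq_two_mul hgR] at h₂ ⊢
  simp only [hg₀] at h₁ h₂
  exact ⟨hg₀, by linear_combination h₁ / 6, by linear_combination -h₂ / 2⟩

theorem exists_piiFC_eventuallyEq_div (hg : AnalyticAt ℂ g p)
    (hu : ∀ᶠ z in 𝓝[≠] p, u z = 1 / (z - p) + g z) :
    ∃ F : ℂ → ℂ, AnalyticAt ℂ F p ∧ F p = 4 ∧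
      ∀ᶠ z in 𝓝[≠] p, piiFC u z = F z / (z - p) ^ 2 := by
  refine ⟨fun z => 4 + (z - p) * (4 * g z + (z - p) * (2 * g z ^ 2 - 2 * deriv g z + z)),
    by fun_prop, by simp, ?_⟩
  have hu' : ∀ᶠ z in 𝓝[≠] p, deriv u z = -1 / (z - p) ^ 2 + deriv g z := by
    simpa using deriv_div_sub_pow_add_eventuallyEq 1 hg (by simpa using hu)
  filter_upwards [hu, hu', eventually_mem_nhdsWithin] with z hz hz' hzp
  have hzp : z - p ≠ 0 := sub_ne_zero.2 hzp
  rw [piiFC, hz, hz']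
  field_simp
  ring

end PainleveII

theorem backlundC_eventuallyEq (α : ℝ) {p : ℂ} {u g F : ℂ → ℂ}
    (hu : ∀ᶠ z in 𝓝[≠] p, u z = 1 / (z - p) + g z)
    (hf : ∀ᶠ z in 𝓝[≠] p, piiFC u z = F z / (z - p) ^ 2) (hF : ∀ᶠ z in 𝓝[≠] p, F z ≠ 0) :
    ∀ᶠ z in 𝓝[≠] p, backlundC α u z =
      -1 / (z - p) + (-g z + (2 * α + 1) * ((z - p) ^ 2 * (F z)⁻¹)) := by
  filter_upwards [hu, hf, hF, eventually_mem_nhdsWithin] with z hz hfz hFz hzp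
  have hzp : z - p ≠ 0 := sub_ne_zero.2 hzp
  rw [backlundC, hz, hfz]
  field_simp
  ring

/-- if `u` solves Painlevé II on a punctured disc around `p`
with a simple pole of residue `+1` at `p`, then the Bäcklund transform
`v = -u + (2α+1)/f` is defined on a punctured neighbourhood of `p`
(`f` is nonvanishing there) and has a simple pole at `p` with residue `-1`;
moreover `h(z) = v(z) + 1/(z-p)` extends analytically to `p` with
`h(p) = 0`, `h'(p) = p/6` and `h''(p) = (α+2)/2`. -/
theorem backlundC_pole_residue_minus_one (α : ℝ) (p : ℂ) (r : ℝ) (hr : 0 < r)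
    (u : ℂ → ℂ) (hu : AnalyticOnNhd ℂ u (ball p r \ {p}))
    (hPII : ∀ z ∈ ball p r \ {p},
      deriv (deriv u) z = 2 * (u z) ^ 3 + z * u z - (α : ℂ))
    (hpole : Tendsto (fun z => (z - p) * u z) (𝓝[≠] p) (𝓝 1)) :
    (∀ᶠ z in 𝓝[≠] p, piiFC u z ≠ 0) ∧
    Tendsto (fun z => (z - p) * backlundC α u z) (𝓝[≠] p) (𝓝 (-1)) ∧
    ∃ H : ℂ → ℂ, AnalyticAt ℂ H p ∧
      (∀ᶠ z in 𝓝[≠] p, H z = backlundC α u z + 1 / (z - p)) ∧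
      H p = 0 ∧ deriv H p = p / 6 ∧
      deriv (deriv H) p = ((α : ℂ) + 2) / 2 := by
  have hdisc : ball p r \ {p} ∈ 𝓝[≠] p := sdiff_mem_nhdsWithin_compl (ball_mem_nhds p hr) _
  obtain ⟨g, hg, hug⟩ := exists_analyticAt_eq_div_sub_add
    (eventually_of_mem hdisc fun z hz => (hu z hz).differentiableAt) hpole
  obtain ⟨hg₀, hg₁, hg₂⟩ := painleveII_regularPart_derivs hg
    (painleveII_regularPart_eq hg hug (eventually_of_mem hdisc hPII))
  obtain ⟨F, hF, hF₄, hfF⟩ := exists_piiFC_eventuallyEq_div hg hug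
  have hFp : F p ≠ 0 := by norm_num [hF₄]
  have hFne : ∀ᶠ z in 𝓝[≠] p, F z ≠ 0 :=
    (hF.continuousAt.eventually_ne hFp).filter_mono nhdsWithin_le_nhds
  have hK : AnalyticAt ℂ (fun z => (F z)⁻¹) p := hF.inv hFp
  have hvH := backlundC_eventuallyEq α hug hfF hFne
  obtain ⟨hH₁, hH₂⟩ := derivs_neg_add_mul_sub_sq_mul (2 * (α : ℂ) + 1) hg hK
  refine ⟨?_, tendsto_sub_mul_of_eventuallyEq_div_sub_add (by fun_prop) hvH,
    fun z => -g z + (2 * α + 1) * ((z - p) ^ 2 * (F z)⁻¹), by fun_prop,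
    hvH.mono fun z hz => by rw [hz]; ring, by simp [hg₀], ?_, ?_⟩
  · filter_upwards [hfF, hFne, eventually_mem_nhdsWithin] with z hfz hFz hzp
    rw [hfz]
    exact div_ne_zero hFz (pow_ne_zero 2 (sub_ne_zero.2 hzp))
  · rw [hH₁, hg₁]
    ring
  · rw [hH₂, hg₂, hF₄]
    ring
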